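/- Let ρ, U : Matrix I I ℂ satisfy T · ρ = ρ · T and T · U = U · T. Then for every j₀ ∈ ZMod n, trace(U · ρ · Uᴴ · Z j₀) = (1/n) · Σ_{j ∈ ZMod n} trace(U · ρ · Uᴴ · Z j). That is, the single-qubit output of the nonsplitting circuit equals the averaged output ⟨Z_avg⟩ of the split-parallelized circuit. -/
import Mathlib

open scoped Matrix

/-- The cyclic shift on computational basis states of `n` qubits:
`shift n x = (i ↦ x (i - 1))`. -/
def shift (n : ℕ) (x : ZMod n → Fin 2) : ZMod n → Fin 2 := fun i => x (i - 1)

/-- The permutation matrix `T` of the cyclic shift: `T` sends the basis vector labelled `y`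
to the one labelled `shift n y`. -/
def Tmat (n : ℕ) [NeZero n] : Matrix (ZMod n → Fin 2) (ZMod n → Fin 2) ℂ :=
  fun x y => if x = shift n y then 1 else 0

/-- The Pauli-Z operator on qubit `j`: diagonal with entries `(-1)^(x j)`. -/
def Zmat (n : ℕ) [NeZero n] (j : ZMod n) : Matrix (ZMod n → Fin 2) (ZMod n → Fin 2) ℂ :=
  Matrix.diagonal fun x => (-1 : ℂ) ^ ((x j : ℕ))

lemma TTH (n : ℕ) [NeZero n] : Tmat n * (Tmat n)ᴴ = 1 := by
  ext x y
  simp only [Matrix.mul_apply, Tmat, Matrix.conjTranspose_apply]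
  rw [Finset.sum_eq_single (fun i => x (i + 1))]
  · have h2 : (x = shift n fun i => x (i + 1)) := by funext i; simp [shift]
    rw [if_pos h2]
    by_cases h : x = y
    · subst h
      rw [if_pos h2, Matrix.one_apply_eq]; simp
    · have h1 : ¬ (y = shift n fun i => x (i + 1)) := by
        intro hy
        apply h
        funext i
        have := congrFun hy i
        simp only [shift, sub_add_cancel] at this
        exact this.symm
      rw [if_neg h1, Matrix.one_apply_ne' (Ne.symm h)]; simp
  · intro z _ hz
    by_cases hx : x = shift n z
    · exfalso; apply hz; funext i
      have := congrFun hx (i + 1)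
      simp only [shift, add_sub_cancel_right] at this
      exact this.symm
    · simp [hx]
  · simp

lemma HTT (n : ℕ) [NeZero n] : (Tmat n)ᴴ * Tmat n = 1 :=
  mul_eq_one_comm.mp (TTH n)

lemma TZ (n : ℕ) [NeZero n] (j : ZMod n) :
    Tmat n * Zmat n j = Zmat n (j + 1) * Tmat n := by
  ext x y
  simp only [Zmat, Matrix.mul_apply, Matrix.diagonal_apply, Tmat]
  rw [Finset.sum_eq_single y, Finset.sum_eq_single x]
  · by_cases h : x = shift n y
    · subst h
      simp [shift]
    · simp [h]
  · intro z _ hz; simp [Ne.symm hz]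
  · simp
  · intro z _ hz; simp [hz]
  · simp

/-- Eq. (10) of the paper: `⟨Z_{j₀}⟩ = ⟨Z_avg⟩` for a translationally symmetric state
and circuit. -/
theorem stmt_12 (n : ℕ) [NeZero n]
    (ρ U : Matrix (ZMod n → Fin 2) (ZMod n → Fin 2) ℂ)
    (hρ : Tmat n * ρ = ρ * Tmat n) (hU : Tmat n * U = U * Tmat n) (j₀ : ZMod n) :
    (U * ρ * Uᴴ * Zmat n j₀).trace =
      (1 / (n : ℂ)) * ∑ j : ZMod n, (U * ρ * Uᴴ * Zmat n j).trace := by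
  set A := U * ρ * Uᴴ with hA
  have hUH : Tmat n * Uᴴ = Uᴴ * Tmat n := by
    have h1 : Uᴴ * (Tmat n)ᴴ = (Tmat n)ᴴ * Uᴴ := by
      rw [← Matrix.conjTranspose_mul, ← Matrix.conjTranspose_mul, hU]
    calc Tmat n * Uᴴ = Tmat n * Uᴴ * ((Tmat n)ᴴ * Tmat n) := by rw [HTT, mul_one]
      _ = Tmat n * (Uᴴ * (Tmat n)ᴴ) * Tmat n := by noncomm_ring
      _ = Tmat n * ((Tmat n)ᴴ * Uᴴ) * Tmat n := by rw [h1]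
      _ = (Tmat n * (Tmat n)ᴴ) * (Uᴴ * Tmat n) := by noncomm_ring
      _ = Uᴴ * Tmat n := by rw [TTH, one_mul]
  have hTA : Tmat n * A = A * Tmat n := by
    rw [hA]
    calc Tmat n * (U * ρ * Uᴴ) = (Tmat n * U) * ρ * Uᴴ := by noncomm_ring
      _ = U * (Tmat n * ρ) * Uᴴ := by rw [hU]; noncomm_ring
      _ = U * ρ * (Tmat n * Uᴴ) := by rw [hρ]; noncomm_ring
      _ = U * ρ * Uᴴ * Tmat n := by rw [hUH]; noncomm_ring
  have key : ∀ j : ZMod n, (A * Zmat n (j + 1)).trace = (A * Zmat n j).trace := by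
    intro j
    have e : A * Zmat n (j + 1) = Tmat n * (A * Zmat n j * (Tmat n)ᴴ) := by
      have e1 : Tmat n * (A * Zmat n j * (Tmat n)ᴴ) = (Tmat n * A) * Zmat n j * (Tmat n)ᴴ := by
        noncomm_ring
      rw [e1, hTA]
      have e2 : A * Tmat n * Zmat n j * (Tmat n)ᴴ = A * (Tmat n * Zmat n j) * (Tmat n)ᴴ := by
        noncomm_ring
      rw [e2, TZ]
      have e3 : A * (Zmat n (j + 1) * Tmat n) * (Tmat n)ᴴ
          = A * Zmat n (j + 1) * (Tmat n * (Tmat n)ᴴ) := by noncomm_ring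
      rw [e3, TTH, mul_one]
    rw [e, Matrix.trace_mul_comm]
    have e4 : A * Zmat n j * (Tmat n)ᴴ * Tmat n = A * Zmat n j * ((Tmat n)ᴴ * Tmat n) := by
      noncomm_ring
    rw [e4, HTT, mul_one]
  have const : ∀ j : ZMod n, (A * Zmat n j).trace = (A * Zmat n j₀).trace := by
    have aux : ∀ k : ℕ, (A * Zmat n (j₀ + (k : ZMod n))).trace = (A * Zmat n j₀).trace := by
      intro k
      induction k with
      | zero => simp
      | succ m ih =>
        have h : j₀ + ((m + 1 : ℕ) : ZMod n) = (j₀ + (m : ℕ)) + 1 := by push_cast; ring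
        rw [h, key, ih]
    intro j
    have := aux (j - j₀).val
    rwa [ZMod.natCast_val, ZMod.cast_id, add_sub_cancel] at this
  rw [Finset.sum_congr rfl (fun j _ => const j)]
  simp only [Finset.sum_const, Finset.card_univ, ZMod.card, nsmul_eq_mul]
  have hn : (n : ℂ) ≠ 0 := Nat.cast_ne_zero.mpr (NeZero.ne n)
  field_simp
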